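/- Let L be a levellised (n+1)-lattice with n > 1 and L̄ = L \ {n}. For a, b ∈ L̄, the join of a and b in L̄ equals their join in L, and the meet of a and b in L̄ equals their meet in L unless that meet equals n, in which case their meet in L̄ is 0. -/

import Mathlib

namespace PaperLattice

variable {N : ℕ}

/-- Depth: one less than the maximum length of a chain from `t` down to `a` w.r.t. `le`. -/
noncomputable def dep (le : Fin N → Fin N → Prop) (t a : Fin N) : ℕ :=
  sSup {k | ∃ l : List (Fin N), List.Chain' (fun x y => le y x ∧ y ≠ x) l ∧
    l.head? = some t ∧ l.getLast? = some a ∧ l.length = k + 1}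

/-- The `d`-th level: elements of depth `d`. -/
noncomputable def lev (le : Fin N → Fin N → Prop) (t : Fin N) (d : ℕ) : Set (Fin N) :=
  {a | dep le t a = d}

/-- A labelled poset is levellised if depth is monotone in the nonzero labels. -/
def Levellised (le : Fin N → Fin N → Prop) (t : Fin N) : Prop :=
  ∀ i j : Fin N, 0 < (i : ℕ) → (i : ℕ) ≤ (j : ℕ) → dep le t i ≤ dep le t j

def lt' (le : Fin N → Fin N → Prop) (a b : Fin N) : Prop := le a b ∧ a ≠ b

/-- `b` covers `a`. -/
def CovByRel (le : Fin N → Fin N → Prop) (a b : Fin N) : Prop :=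
  lt' le a b ∧ ∀ x, lt' le a x → lt' le x b → False

/-- The covering set of `a`. -/
def cov (le : Fin N → Fin N → Prop) (a : Fin N) : Set (Fin N) := {b | CovByRel le a b}

/-- The up-set of `A`. -/
def upset (le : Fin N → Fin N → Prop) (A : Set (Fin N)) : Set (Fin N) :=
  {x | ∃ a ∈ A, le a x}

def AntichainRel (le : Fin N → Fin N → Prop) (A : Set (Fin N)) : Prop :=
  ∀ a ∈ A, ∀ b ∈ A, a ≠ b → ¬ le a b

/-- Binary weight of a set of labels. -/
noncomputable def wt (A : Set (Fin N)) : ℕ :=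
  ∑ j : Fin N, A.indicator (fun j => 2 ^ (j : ℕ)) j

/-- `z` is a bottom and `o` a top for `le`. -/
def Bounds (le : Fin N → Fin N → Prop) (z o : Fin N) : Prop :=
  (∀ a, le z a) ∧ (∀ a, le a o)

/-- The order obtained from `le` by adding `m` new atoms, the `i`-th having covering set `A i`. -/
def extLe {n m : ℕ} (le : Fin n → Fin n → Prop) (A : Fin m → Set (Fin n)) :
    Fin (n + m) → Fin (n + m) → Prop := fun x y =>
  if hx : (x : ℕ) < n then
    if hy : (y : ℕ) < n then le ⟨x, hx⟩ ⟨y, hy⟩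
    else (x : ℕ) = 0
  else
    if hy : (y : ℕ) < n then
      (⟨y, hy⟩ : Fin n) ∈ upset le (A ⟨(x : ℕ) - n, by have := x.isLt; omega⟩)
    else x = y

/-- The relabelled order `π(L)`. -/
def permLe {n : ℕ} (π : Equiv.Perm (Fin n)) (le : Fin n → Fin n → Prop) :
    Fin n → Fin n → Prop := fun a b => le (π.symm a) (π.symm b)

/-!
Depth strictly decreases along `<`, while in a levellised lattice the largest label `n` has
maximal depth; so only `0` lies strictly below `n`, i.e. `n` is an atom. Removing an atom keeps
joins (a join equal to the atom would force both arguments to be `0`), and a meet equal to the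
atom can be replaced by `0`, the only element of `L̄` below it.
-/

def depSet (le : Fin N → Fin N → Prop) (t a : Fin N) : Set ℕ :=
  {k | ∃ l : List (Fin N), List.IsChain (fun x y => le y x ∧ y ≠ x) l ∧
    l.head? = some t ∧ l.getLast? = some a ∧ l.length = k + 1}

lemma dep_eq_sSup_depSet (le : Fin N → Fin N → Prop) (t a : Fin N) :
    dep le t a = sSup (depSet le t a) := rfl

section Depth

variable (P : PartialOrder (Fin N))

lemma depSet_bddAbove (t a : Fin N) : BddAbove (depSet P.le t a) := by
  refine ⟨N, fun k ⟨l, hchain, _, _, hlen⟩ => ?_⟩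
  have : IsTrans (Fin N) (fun x y => P.le y x ∧ y ≠ x) :=
    ⟨fun _ _ _ ⟨hyx, hne⟩ ⟨hwy, _⟩ => ⟨P.le_trans _ _ _ hwy hyx,
      fun hwx => hne (P.le_antisymm _ _ hyx (hwx ▸ hwy))⟩⟩
  have hnodup : l.Nodup := (List.isChain_iff_pairwise.mp hchain).imp fun h => h.2.symm
  have := hnodup.length_le_card
  simp only [Fintype.card_fin] at this
  omega

variable {P} {t : Fin N}

lemma depSet_nonempty (htop : ∀ x, P.le x t) (a : Fin N) : (depSet P.le t a).Nonempty := by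
  by_cases h : a = t
  · exact ⟨0, [t], by simp, rfl, by simp [h], rfl⟩
  · exact ⟨1, [t, a], by simp [htop a, h], rfl, rfl, rfl⟩

/-- A longest chain from `t` to `a`, extended by `c`, is a chain from `t` to `c`. -/
lemma dep_add_one_le_of_lt (htop : ∀ x, P.le x t) {a c : Fin N} (hle : P.le c a) (hne : c ≠ a) :
    dep P.le t a + 1 ≤ dep P.le t c := by
  obtain ⟨l, hchain, hhead, hlast, hlen⟩ :=
    Nat.sSup_mem (depSet_nonempty htop a) (depSet_bddAbove P t a)
  have hl : l ≠ [] := by rintro rfl; simp at hhead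
  have hext : dep P.le t a + 1 ∈ depSet P.le t c := by
    refine ⟨l ++ [c], ?_, ?_, ?_, ?_⟩
    · rw [List.isChain_append]
      refine ⟨hchain, List.isChain_singleton _, fun x hx y hy => ?_⟩
      rw [hlast, Option.mem_some_iff] at hx
      rw [List.head?_singleton, Option.mem_some_iff] at hy
      subst hx hy
      exact ⟨hle, hne⟩
    · rwa [List.head?_append_of_ne_nil _ hl]
    · simp
    · simp [hlen, dep_eq_sSup_depSet]
  exact le_csSup (depSet_bddAbove P t c) hext

end Depth

lemma eq_zero_or_eq_last_of_le_last {n : ℕ} {P : PartialOrder (Fin (n + 1))} {t : Fin (n + 1)}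
    (htop : ∀ x, P.le x t) (hlev : Levellised P.le t) {c : Fin (n + 1)}
    (hc : P.le c (Fin.last n)) : c = 0 ∨ c = Fin.last n := by
  by_contra! h
  have hdeep := dep_add_one_le_of_lt htop hc h.2
  have hshallow := hlev c (Fin.last n) (Fin.pos_iff_ne_zero.mpr h.1) c.is_le
  omega

section EraseLast

variable {n : ℕ} (L : Lattice (Fin (n + 1))) (z : Fin n)

lemma eq_of_castSucc_le_last
    (hatom : ∀ c, L.le c (Fin.last n) → c = z.castSucc ∨ c = Fin.last n)
    {a : Fin n} (ha : L.le a.castSucc (Fin.last n)) : a = z :=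
  Fin.castSucc_injective _ ((hatom _ ha).resolve_right (Fin.castSucc_ne_last a))

lemma sup_castSucc_ne_last
    (hatom : ∀ c, L.le c (Fin.last n) → c = z.castSucc ∨ c = Fin.last n) (a b : Fin n) :
    L.sup a.castSucc b.castSucc ≠ Fin.last n := by
  intro h
  obtain rfl := eq_of_castSucc_le_last L z hatom (h ▸ L.le_sup_left _ _)
  obtain rfl := eq_of_castSucc_le_last L _ hatom (h ▸ L.le_sup_right _ _)
  rw [L.le_antisymm _ _ (L.sup_le _ _ _ (L.le_refl _) (L.le_refl _)) (L.le_sup_left _ _)] at h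
  exact Fin.castSucc_ne_last _ h

abbrev eraseLast (hz : ∀ c, L.le z.castSucc c)
    (hatom : ∀ c, L.le c (Fin.last n) → c = z.castSucc ∨ c = Fin.last n) : Lattice (Fin n) where
  le a b := L.le a.castSucc b.castSucc
  le_refl _ := L.le_refl _
  le_trans _ _ _ := L.le_trans _ _ _
  le_antisymm _ _ hab hba := Fin.castSucc_injective _ (L.le_antisymm _ _ hab hba)
  lt a b := L.lt a.castSucc b.castSucc
  lt_iff_le_not_ge _ _ := L.lt_iff_le_not_ge _ _
  sup a b := (L.sup a.castSucc b.castSucc).castPred (sup_castSucc_ne_last L z hatom a b)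
  le_sup_left a b := by rw [Fin.castSucc_castPred]; exact L.le_sup_left _ _
  le_sup_right a b := by rw [Fin.castSucc_castPred]; exact L.le_sup_right _ _
  sup_le a b c hac hbc := by rw [Fin.castSucc_castPred]; exact L.sup_le _ _ _ hac hbc
  inf a b :=
    if h : L.inf a.castSucc b.castSucc = Fin.last n then z
    else (L.inf a.castSucc b.castSucc).castPred h
  inf_le_left a b := by
    split
    · exact hz _
    · rw [Fin.castSucc_castPred]; exact L.inf_le_left _ _
  inf_le_right a b := by
    split
    · exact hz _
    · rw [Fin.castSucc_castPred]; exact L.inf_le_right _ _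
  le_inf x a b hxa hxb := by
    have hx := L.le_inf _ _ _ hxa hxb
    split
    · rename_i h
      obtain rfl := eq_of_castSucc_le_last L z hatom (h ▸ hx)
      exact L.le_refl _
    · rw [Fin.castSucc_castPred]; exact hx

variable (hz : ∀ c, L.le z.castSucc c)
  (hatom : ∀ c, L.le c (Fin.last n) → c = z.castSucc ∨ c = Fin.last n)

lemma castSucc_eraseLast_sup (a b : Fin n) :
    ((eraseLast L z hz hatom).sup a b).castSucc = L.sup a.castSucc b.castSucc :=
  Fin.castSucc_castPred _ _

lemma eraseLast_inf_of_eq_last {a b : Fin n} (h : L.inf a.castSucc b.castSucc = Fin.last n) :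
    (eraseLast L z hz hatom).inf a b = z :=
  dif_pos h

lemma castSucc_eraseLast_inf_of_ne_last {a b : Fin n}
    (h : L.inf a.castSucc b.castSucc ≠ Fin.last n) :
    ((eraseLast L z hz hatom).inf a b).castSucc = L.inf a.castSucc b.castSucc := by
  rw [← Fin.castSucc_castPred _ h]
  exact congrArg Fin.castSucc (dif_neg h)

end EraseLast

/-- in `L̄ = L \ {n}`, joins agree with those of `L`, and meets agree unless the
meet in `L` is the removed atom `n`, in which case the meet in `L̄` is `0`. -/
theorem statement3 {n : ℕ} (hn : 1 < n) (L : Lattice (Fin (n + 1)))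
    (hb : Bounds L.le ⟨0, by omega⟩ ⟨1, by omega⟩)
    (hlev : Levellised L.le ⟨1, by omega⟩) :
    ∃ M : Lattice (Fin n),
      (∀ a b : Fin n, M.le a b ↔ L.le a.castSucc b.castSucc) ∧
      ∀ a b : Fin n,
        Fin.castSucc (M.sup a b) = L.sup a.castSucc b.castSucc ∧
        (L.inf a.castSucc b.castSucc = Fin.last n → M.inf a b = ⟨0, by omega⟩) ∧
        (L.inf a.castSucc b.castSucc ≠ Fin.last n →
          Fin.castSucc (M.inf a b) = L.inf a.castSucc b.castSucc) := by
  have hbot : ∀ c, L.le (⟨0, by omega⟩ : Fin n).castSucc c := hb.1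
  have hatom : ∀ c, L.le c (Fin.last n) → c = (⟨0, by omega⟩ : Fin n).castSucc ∨ c = Fin.last n :=
    fun _ hc => eq_zero_or_eq_last_of_le_last hb.2 hlev hc
  exact ⟨eraseLast L _ hbot hatom, fun _ _ => Iff.rfl, fun a b =>
    ⟨castSucc_eraseLast_sup L _ hbot hatom a b, eraseLast_inf_of_eq_last L _ hbot hatom,
      castSucc_eraseLast_inf_of_ne_last L _ hbot hatom⟩⟩

end PaperLattice
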